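/- Let d ≥ 1 and let u ∈ ℓ²(ℤ^d) satisfy |Δ_d u_j| ≤ |V_j u_j| for all j ∈ ℤ^d, with ‖u‖_{ℓ²} ≤ A, |u_0| ≥ 1 (where u_0 is the value of u at the lattice point j = 0), and ‖V‖_∞ = sup_{j∈ℤ^d} |V_j| ≤ L. Then there exist R₀ = R₀(d, L, A) > 0 and c = c(d) > 0 such that for every R ≥ R₀, λ(R) := (Σ_{j∈ℤ^d, R−2 ≤ |j| ≤ R+1} |u_j|²)^{1/2} ≥ c e^{−c R log R}. -/

import Mathlib

/-- Euclidean norm of a lattice point of `ℤ^d`. -/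
noncomputable def latNorm {d : ℕ} (j : Fin d → ℤ) : ℝ :=
  Real.sqrt (∑ k, ((j k : ℝ)) ^ 2)

/-- Discrete Laplacian on `ℤ^d`:
`Δ_d f j = Σ_{k=1}^d (f (j+e_k) + f (j-e_k) - 2 f j)`. -/
noncomputable def discreteLap {d : ℕ} (f : (Fin d → ℤ) → ℂ) (j : Fin d → ℤ) : ℂ :=
  ∑ k, (f (j + Pi.single k 1) + f (j - Pi.single k 1) - 2 * f j)

/-!
Starting from `0`, build a path `x₀ = 0, x₁, x₂, …` in `ℤ^d` along which `|u|` decays at most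
geometrically: from `p`, step outwards to `j = p ± e_k` along a coordinate of maximal modulus and
solve `Δu(j) = Σ_{neighbours} u - 2d u(j)` for `u p`; since `|Δu(j)| ≤ L |u(j)|`, some point `q`
among `j` and its neighbours other than `p` has `|u p| ≤ (L + 4d) |u q|`. Each such `q` has larger
sup norm and Euclidean norm at most `|p| + 2`, so `|x_n| ≥ n` while the path moves by at most `2`
per step. It therefore enters the shell `R - 2 < |j| ≤ R` after `n ≤ R - 1` steps, where
`|u(x_n)| ≥ (L + 4d)^{-n} ≥ R^{-R} = e^{-R log R}` as soon as `R ≥ L + 4d`.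
-/

open Finset

section Lattice

variable {d : ℕ}

lemma latNorm_eq_norm (x : Fin d → ℤ) :
    latNorm x = ‖WithLp.toLp 2 (fun k => (x k : ℝ))‖ := by
  simp [latNorm, EuclideanSpace.norm_eq, Real.norm_eq_abs, sq_abs]

lemma latNorm_nonneg (x : Fin d → ℤ) : 0 ≤ latNorm x := Real.sqrt_nonneg _

@[simp] lemma latNorm_zero : latNorm (0 : Fin d → ℤ) = 0 := by simp [latNorm]

lemma latNorm_add_le (x y : Fin d → ℤ) : latNorm (x + y) ≤ latNorm x + latNorm y := by
  simp only [latNorm_eq_norm, Pi.add_apply, Int.cast_add]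
  exact norm_add_le (WithLp.toLp 2 fun k => (x k : ℝ)) (WithLp.toLp 2 fun k => (y k : ℝ))

@[simp] lemma latNorm_single (m : Fin d) (t : ℤ) : latNorm (Pi.single m t) = |(t : ℝ)| := by
  simp [latNorm, Pi.single_apply, apply_ite, Real.sqrt_sq_eq_abs]

lemma natAbs_le_latNorm (x : Fin d → ℤ) (k : Fin d) : ((x k).natAbs : ℝ) ≤ latNorm x := by
  rw [Nat.cast_natAbs, Int.cast_abs, latNorm, ← Real.sqrt_sq_eq_abs]
  exact Real.sqrt_le_sqrt (single_le_sum (f := fun m => (x m : ℝ) ^ 2)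
    (fun m _ => sq_nonneg _) (mem_univ k))

def supNorm (x : Fin d → ℤ) : ℕ := univ.sup fun k => (x k).natAbs

lemma supNorm_le_latNorm (x : Fin d → ℤ) : (supNorm x : ℝ) ≤ latNorm x :=
  (Nat.le_floor_iff (latNorm_nonneg x)).1 <|
    Finset.sup_le fun k _ => Nat.le_floor (natAbs_le_latNorm x k)

lemma le_supNorm (x : Fin d → ℤ) (k : Fin d) : (x k).natAbs ≤ supNorm x :=
  le_sup (f := fun m => (x m).natAbs) (mem_univ k)

lemma supNorm_lt_and_latNorm_le {p : Fin d → ℤ} {k : Fin d}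
    (hk : supNorm p = (p k).natAbs) {s : ℤ} (hs : s = if 0 ≤ p k then 1 else -1)
    {m : Fin d} {t : ℤ} (ht : |t| ≤ 1) (hkt : m = k → 0 ≤ t * s) :
    supNorm p < supNorm (p + Pi.single k s + Pi.single m t) ∧
      latNorm (p + Pi.single k s + Pi.single m t) ≤ latNorm p + 2 := by
  constructor
  · refine hk ▸ lt_of_lt_of_le ?_ (le_supNorm _ k)
    by_cases hm : m = k
    · subst hm; have := hkt rfl
      simp only [Pi.add_apply, Pi.single_eq_same]
      split_ifs at hs <;> subst hs <;> omega
    · simp only [Pi.add_apply, Pi.single_eq_same, Pi.single_eq_of_ne' hm, add_zero]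
      split_ifs at hs <;> subst hs <;> omega
  · have hs1 : |(s : ℝ)| = 1 := by split_ifs at hs <;> simp [hs]
    have ht1 : |(t : ℝ)| ≤ 1 := by exact_mod_cast ht
    calc latNorm (p + Pi.single k s + Pi.single m t)
        ≤ latNorm p + latNorm (Pi.single k s) + latNorm (Pi.single m t) :=
          (latNorm_add_le _ _).trans (by gcongr; exact latNorm_add_le _ _)
      _ ≤ latNorm p + 2 := by rw [latNorm_single, latNorm_single, hs1]; linarith

end Lattice

lemma norm_le_norm_sum_add_sum_erase {ι E : Type*} [NormedAddCommGroup E] [DecidableEq ι]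
    {s : Finset ι} {i : ι} (hi : i ∈ s) (f : ι → E) :
    ‖f i‖ ≤ ‖∑ x ∈ s, f x‖ + ∑ x ∈ s.erase i, ‖f x‖ := by
  calc ‖f i‖ = ‖∑ x ∈ s, f x - ∑ x ∈ s.erase i, f x‖ := by
        rw [← add_sum_erase s f hi, add_sub_cancel_right]
    _ ≤ ‖∑ x ∈ s, f x‖ + ‖∑ x ∈ s.erase i, f x‖ := norm_sub_le _ _
    _ ≤ ‖∑ x ∈ s, f x‖ + ∑ x ∈ s.erase i, ‖f x‖ := by gcongr; exact norm_sum_le _ _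

/-- `(m, t)` encodes the step `t • e_m`. -/
def unitSteps (d : ℕ) : Finset (Fin d × ℤ) := univ ×ˢ {1, -1}

lemma card_unitSteps (d : ℕ) : #(unitSteps d) = 2 * d := by
  simp [unitSteps, card_product, mul_comm]

lemma discreteLap_eq_sum_unitSteps {d : ℕ} (f : (Fin d → ℤ) → ℂ) (j : Fin d → ℤ) :
    discreteLap f j = ∑ b ∈ unitSteps d, f (j + Pi.single b.1 b.2) - 2 * d * f j := by
  simp [discreteLap, unitSteps, sum_product, sum_sub_distrib, Pi.single_neg, ← sub_eq_add_neg]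
  ring

section Step

variable {d : ℕ} {u V : (Fin d → ℤ) → ℂ} {L : ℝ} {j : Fin d → ℤ}

lemma norm_neighbor_le (hlap : ‖discreteLap u j‖ ≤ ‖V j * u j‖) (hV : ‖V j‖ ≤ L)
    {a : Fin d × ℤ} (ha : a ∈ unitSteps d) {M : ℝ} (hMj : ‖u j‖ ≤ M)
    (hM : ∀ b ∈ (unitSteps d).erase a, ‖u (j + Pi.single b.1 b.2)‖ ≤ M) :
    ‖u (j + Pi.single a.1 a.2)‖ ≤ (L + 4 * d) * M := by
  have hM0 : 0 ≤ M := (norm_nonneg _).trans hMj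
  have hsum : ∑ b ∈ unitSteps d, u (j + Pi.single b.1 b.2) = discreteLap u j + 2 * d * u j := by
    rw [discreteLap_eq_sum_unitSteps]; ring
  have hlapM : ‖discreteLap u j‖ ≤ L * M := by
    rw [norm_mul] at hlap
    exact hlap.trans (mul_le_mul hV hMj (norm_nonneg _) ((norm_nonneg _).trans hV))
  have hrest : ∑ b ∈ (unitSteps d).erase a, ‖u (j + Pi.single b.1 b.2)‖ ≤ 2 * d * M :=
    calc _ ≤ #((unitSteps d).erase a) • M := sum_le_card_nsmul _ _ _ hM
      _ ≤ #(unitSteps d) • M := nsmul_le_nsmul_left hM0 card_erase_le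
      _ = 2 * d * M := by rw [card_unitSteps, nsmul_eq_mul]; push_cast; ring
  calc ‖u (j + Pi.single a.1 a.2)‖
      ≤ ‖discreteLap u j + 2 * d * u j‖ + 2 * d * M := by
        have := norm_le_norm_sum_add_sum_erase ha fun b => u (j + Pi.single b.1 b.2)
        rw [hsum] at this
        linarith
    _ ≤ L * M + 2 * d * M + 2 * d * M := by
        gcongr
        refine (norm_add_le _ _).trans (add_le_add hlapM ?_)
        rw [norm_mul]
        gcongr
        simp
    _ = (L + 4 * d) * M := by ring

end Step

section Path

variable {d : ℕ} [NeZero d] {u V : (Fin d → ℤ) → ℂ} {L : ℝ}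

lemma exists_outward_step (hlap : ∀ j, ‖discreteLap u j‖ ≤ ‖V j * u j‖) (hV : ∀ j, ‖V j‖ ≤ L)
    (p : Fin d → ℤ) :
    ∃ q, ‖u p‖ ≤ (L + 4 * d) * ‖u q‖ ∧ supNorm p < supNorm q ∧ latNorm q ≤ latNorm p + 2 := by
  obtain ⟨k, -, hk⟩ := exists_mem_eq_sup univ univ_nonempty fun m => (p m).natAbs
  set s : ℤ := if 0 ≤ p k then 1 else -1 with hs
  have hs1 : s = 1 ∨ s = -1 := by rw [hs]; split_ifs <;> simp
  set j := p + Pi.single k s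
  have ha : (k, -s) ∈ unitSteps d := by rcases hs1 with h | h <;> simp [unitSteps, h]
  have hpj : j + Pi.single k (-s) = p := by simp [j, Pi.single_neg]
  set G := insert j (((unitSteps d).erase (k, -s)).image fun b => j + Pi.single b.1 b.2)
  obtain ⟨q, hqG, hq⟩ := G.exists_max_image (fun x => ‖u x‖) ⟨j, mem_insert_self _ _⟩
  refine ⟨q, ?_, ?_⟩
  · rw [← hpj]
    exact norm_neighbor_le (hlap j) (hV j) ha (hq j (mem_insert_self _ _))
      fun b hb => hq _ (mem_insert_of_mem (mem_image_of_mem _ hb))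
  · rcases mem_insert.1 hqG with rfl | hq'
    · simpa using supNorm_lt_and_latNorm_le (m := k) (t := 0) hk hs (by simp) (by simp)
    obtain ⟨⟨m, t⟩, hb, rfl⟩ := mem_image.1 hq'
    obtain ⟨hne, hmem⟩ := mem_erase.1 hb
    have ht : t = 1 ∨ t = -1 := by simpa [unitSteps] using hmem
    refine supNorm_lt_and_latNorm_le hk hs (by rcases ht with rfl | rfl <;> simp) fun hm => ?_
    subst hm
    rcases ht with rfl | rfl <;> rcases hs1 with h | h <;> simp_all

lemma exists_outward_path (hlap : ∀ j, ‖discreteLap u j‖ ≤ ‖V j * u j‖) (hV : ∀ j, ‖V j‖ ≤ L)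
    (hu0 : 1 ≤ ‖u 0‖) :
    ∃ x : ℕ → Fin d → ℤ, x 0 = 0 ∧ ∀ n, 1 ≤ (L + 4 * d) ^ n * ‖u (x n)‖ ∧
      (n : ℝ) ≤ latNorm (x n) ∧ latNorm (x (n + 1)) ≤ latNorm (x n) + 2 := by
  choose f hnorm hsup hlat using exists_outward_step hlap hV
  have hsucc (n : ℕ) : f^[n + 1] 0 = f (f^[n] 0) := Function.iterate_succ_apply' f n 0
  have hgrow (n : ℕ) : n ≤ supNorm (f^[n] 0) := by
    induction n with
    | zero => exact Nat.zero_le _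
    | succ n ih => rw [hsucc]; exact (hsup _).trans_le' (by omega)
  refine ⟨fun n => f^[n] 0, rfl, fun n => ⟨?_, ?_, ?_⟩⟩
  · have hL : 0 ≤ L + 4 * d := by linarith [(norm_nonneg _).trans (hV 0)]
    induction n with
    | zero => simpa using hu0
    | succ n ih =>
      calc (1 : ℝ) ≤ (L + 4 * d) ^ n * ‖u (f^[n] 0)‖ := ih
        _ ≤ (L + 4 * d) ^ n * ((L + 4 * d) * ‖u (f^[n + 1] 0)‖) := by
          rw [hsucc]; gcongr; exact hnorm _
        _ = (L + 4 * d) ^ (n + 1) * ‖u (f^[n + 1] 0)‖ := by ring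
  · exact (Nat.cast_le.2 (hgrow n)).trans (supNorm_le_latNorm _)
  · simpa only [hsucc] using hlat (f^[n] 0)

end Path

lemma norm_le_sqrt_tsum_ite {ι E : Type*} [NormedAddCommGroup E] {u : ι → E}
    (hu : Summable fun j => ‖u j‖ ^ 2) {P : ι → Prop} [DecidablePred P] {x : ι} (hx : P x) :
    ‖u x‖ ≤ √(∑' j, if P j then ‖u j‖ ^ 2 else 0) := by
  have hnonneg : ∀ j, 0 ≤ if P j then ‖u j‖ ^ 2 else 0 := fun j => by split <;> positivity
  have hsum : Summable fun j => if P j then ‖u j‖ ^ 2 else 0 :=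
    hu.of_nonneg_of_le hnonneg fun j => by split <;> simp
  refine Real.le_sqrt_of_sq_le ?_
  simpa [hx] using hsum.le_tsum x fun j _ => hnonneg j

lemma exists_crossing_of_step_le {a : ℕ → ℝ} {t δ : ℝ} (h0 : a 0 ≤ t)
    (hstep : ∀ n, a (n + 1) ≤ a n + δ) (hgrow : ∀ n : ℕ, (n : ℝ) ≤ a n) :
    ∃ n, t < a n ∧ a n ≤ t + δ ∧ (n : ℝ) ≤ t + 1 := by
  classical
  have hex : ∃ n, t < a n := ⟨⌈t⌉₊ + 1, by
    have := hgrow (⌈t⌉₊ + 1); push_cast at this; linarith [Nat.le_ceil t]⟩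
  obtain ⟨m, hm⟩ : ∃ m, Nat.find hex = m + 1 :=
    Nat.exists_eq_add_one.2 <| Nat.pos_of_ne_zero fun h => (Nat.find_spec hex).not_ge (h ▸ h0)
  have hcross := Nat.find_spec hex
  have hbefore : a m ≤ t := not_lt.1 <| Nat.find_min hex (by omega)
  rw [hm] at hcross
  refine ⟨m + 1, hcross, by linarith [hstep m], ?_⟩
  push_cast
  linarith [hgrow m]

lemma pow_le_exp_mul_log {K R : ℝ} {n : ℕ} (hK : 1 ≤ K) (hKR : K ≤ R) (hn : (n : ℝ) ≤ R) :
    K ^ n ≤ Real.exp (R * Real.log R) := by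
  have hR : 1 ≤ R := hK.trans hKR
  calc K ^ n ≤ R ^ n := pow_le_pow_left₀ (by linarith) hKR n
    _ = R ^ (n : ℝ) := (Real.rpow_natCast R n).symm
    _ ≤ R ^ R := Real.rpow_le_rpow_of_exponent_le hR hn
    _ = Real.exp (R * Real.log R) := by rw [Real.rpow_def_of_pos (by linarith), mul_comm]

theorem lower_bound_stationary (d : ℕ) (hd : 1 ≤ d) :
    ∃ c : ℝ, 0 < c ∧
      ∀ A L : ℝ, ∃ R₀ : ℝ, 0 < R₀ ∧
        ∀ u V : (Fin d → ℤ) → ℂ,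
          Summable (fun j => ‖u j‖ ^ 2) →
          (∀ j, ‖discreteLap u j‖ ≤ ‖V j * u j‖) →
          Real.sqrt (∑' j : Fin d → ℤ, ‖u j‖ ^ 2) ≤ A →
          1 ≤ ‖u (0 : Fin d → ℤ)‖ →
          (∀ j, ‖V j‖ ≤ L) →
          ∀ R : ℝ, R₀ ≤ R →
            c * Real.exp (-c * R * Real.log R) ≤
              Real.sqrt (∑' j : Fin d → ℤ,
                if R - 2 ≤ latNorm j ∧ latNorm j ≤ R + 1 then ‖u j‖ ^ 2 else 0) := by
  refine ⟨1, one_pos, fun A L => ⟨|L| + 4 * d + 2, by positivity, ?_⟩⟩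
  intro u V hu hlap _ hu0 hV R hR
  have : NeZero d := ⟨by omega⟩
  have hL : 0 ≤ L := (norm_nonneg _).trans (hV 0)
  have hd1 : (1 : ℝ) ≤ d := by exact_mod_cast hd
  rw [abs_of_nonneg hL] at hR
  obtain ⟨x, hx0, hx⟩ := exists_outward_path hlap hV hu0
  obtain ⟨n, hlo, hhi, hn⟩ := exists_crossing_of_step_le (a := fun n => latNorm (x n))
    (t := R - 2) (by simp only [hx0, latNorm_zero]; linarith) (fun n => (hx n).2.2)
    (fun n => (hx n).2.1)
  have hpow : (L + 4 * d) ^ n ≤ Real.exp (R * Real.log R) :=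
    pow_le_exp_mul_log (by linarith) (by linarith) (by linarith)
  calc 1 * Real.exp (-1 * R * Real.log R) = (Real.exp (R * Real.log R))⁻¹ := by
        rw [← Real.exp_neg]; ring_nf
    _ ≤ ‖u (x n)‖ := (inv_le_iff_one_le_mul₀' (Real.exp_pos _)).2 <|
        (hx n).1.trans (by gcongr)
    _ ≤ _ := norm_le_sqrt_tsum_ite hu ⟨hlo.le, by linarith⟩
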